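/- arXiv:2501.11077 — 2 statements merged into one kernel-verified Lean document; each statement's English description precedes it below -/
import Mathlib

section
/- For p ∈ [0,1], the function p ↦ (16 - 8p)/(6 - 4p + p²) attains its maximum at p = 2 - √2, and this maximum value equals 2√2, which is less than 3. -/
theorem max_of_ratio_at_two_sub_sqrt_two :
    (∀ p : ℝ, 0 ≤ p → p ≤ 1 →
      (16 - 8 * p) / (6 - 4 * p + p ^ 2) ≤
        (16 - 8 * (2 - Real.sqrt 2)) / (6 - 4 * (2 - Real.sqrt 2) + (2 - Real.sqrt 2) ^ 2)) ∧
    (16 - 8 * (2 - Real.sqrt 2)) / (6 - 4 * (2 - Real.sqrt 2) + (2 - Real.sqrt 2) ^ 2)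
      = 2 * Real.sqrt 2 ∧
    2 * Real.sqrt 2 < 3 := by
  have h2 : Real.sqrt 2 ^ 2 = 2 := Real.sq_sqrt (by norm_num)
  have h2' : (1:ℝ) < Real.sqrt 2 := by
    nlinarith [Real.sqrt_nonneg 2]
  have hval : (16 - 8 * (2 - Real.sqrt 2)) / (6 - 4 * (2 - Real.sqrt 2) + (2 - Real.sqrt 2) ^ 2)
      = 2 * Real.sqrt 2 := by
    have hden : 6 - 4 * (2 - Real.sqrt 2) + (2 - Real.sqrt 2) ^ 2 = 4 := by nlinarith
    rw [hden]
    ring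
  refine ⟨?_, hval, by nlinarith⟩
  intro p hp0 hp1
  rw [hval]
  have hden : (0:ℝ) < 6 - 4 * p + p ^ 2 := by nlinarith [sq_nonneg (p - 2)]
  rw [div_le_iff₀ hden]
  nlinarith [sq_nonneg (p - (2 - Real.sqrt 2)), Real.sqrt_nonneg 2]
end

section
/- Fix τ ∈ ℝ and m₀ ≥ 1 with m₀ + τ > 0. Then Σ_{j=m₀}^{m-1} (1/j) · Γ(m+τ)Γ(j)/(Γ(j+τ)Γ(m)) is O(1) if τ < 0, O(log m) if τ = 0, and O(m^τ) if τ > 0, as m → ∞. -/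
open Finset Filter Asymptotics Real

private lemma telescope_Ico (g : ℕ → ℝ) {a b : ℕ} (h : a ≤ b) :
    ∑ j ∈ Finset.Ico a b, (g (j + 1) - g j) = g b - g a := by
  induction b, h using Nat.le_induction with
  | base => simp
  | succ n hn ih =>
    rw [Finset.sum_Ico_succ_top (by omega), ih]; ring

private lemma harmonic_tail (m : ℕ) (hm : 1 ≤ m) :
    ∑ k ∈ Finset.Ico 2 (m + 1), (1 / (k : ℝ)) ≤ Real.log m := by
  induction m, hm using Nat.le_induction with
  | base => simp
  | succ n hn ih =>
    rw [Finset.sum_Ico_succ_top (by omega)]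
    have hn0 : (0:ℝ) < n := by exact_mod_cast hn
    have h1 : Real.log ((n:ℝ) / (n + 1)) ≤ (n:ℝ) / (n + 1) - 1 :=
      Real.log_le_sub_one_of_pos (by positivity)
    have h2 : Real.log ((n:ℝ) / (n + 1)) = Real.log n - Real.log (n + 1) :=
      Real.log_div (by positivity) (by positivity)
    have h3 : (n:ℝ) / (n + 1) - 1 = -(1 / ((n:ℝ) + 1)) := by field_simp; ring
    have key : (1:ℝ) / ((n:ℝ) + 1) ≤ Real.log ((n:ℝ) + 1) - Real.log n := by
      rw [h2] at h1; linarith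
    push_cast
    linarith

private lemma harmonic_le (m : ℕ) :
    ∑ k ∈ Finset.Ico 1 m, (1 / (k : ℝ)) ≤ 1 + Real.log m := by
  rcases Nat.eq_zero_or_pos m with h | h
  · subst h; simp
  · calc ∑ k ∈ Finset.Ico 1 m, (1 / (k : ℝ))
        ≤ ∑ k ∈ Finset.Ico 1 (m + 1), (1 / (k : ℝ)) := by
          apply Finset.sum_le_sum_of_subset_of_nonneg
            (Finset.Ico_subset_Ico le_rfl (Nat.le_succ m))
          intro i _ _; positivity
      _ = 1 + ∑ k ∈ Finset.Ico 2 (m + 1), (1 / (k : ℝ)) := by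
          rw [Finset.sum_eq_sum_Ico_succ_bot (by omega)]; norm_num
      _ ≤ 1 + Real.log m := by linarith [harmonic_tail m h]

open Finset Filter Asymptotics Real in
theorem gamma_ratio_sum_asymptotics (τ : ℝ) (m₀ : ℕ) (hm₀ : 1 ≤ m₀)
    (hpos : 0 < (m₀ : ℝ) + τ) :
    ((τ < 0 →
        (fun m : ℕ => ∑ j ∈ Finset.Ico m₀ m,
            (1 / (j : ℝ)) * (Real.Gamma ((m : ℝ) + τ) * Real.Gamma j /
              (Real.Gamma ((j : ℝ) + τ) * Real.Gamma m)))
          =O[atTop] (fun _ : ℕ => (1 : ℝ))) ∧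
      (τ = 0 →
        (fun m : ℕ => ∑ j ∈ Finset.Ico m₀ m,
            (1 / (j : ℝ)) * (Real.Gamma ((m : ℝ) + τ) * Real.Gamma j /
              (Real.Gamma ((j : ℝ) + τ) * Real.Gamma m)))
          =O[atTop] (fun m : ℕ => Real.log m)) ∧
      (0 < τ →
        (fun m : ℕ => ∑ j ∈ Finset.Ico m₀ m,
            (1 / (j : ℝ)) * (Real.Gamma ((m : ℝ) + τ) * Real.Gamma j /
              (Real.Gamma ((j : ℝ) + τ) * Real.Gamma m)))
          =O[atTop] (fun m : ℕ => (m : ℝ) ^ τ))) := by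
  set c : ℕ → ℝ := fun j => Real.Gamma j / Real.Gamma ((j : ℝ) + τ) with hc
  have hjτ : ∀ j : ℕ, m₀ ≤ j → 0 < (j : ℝ) + τ := by
    intro j hj
    have : (m₀:ℝ) ≤ j := by exact_mod_cast hj
    linarith
  have hjpos : ∀ j : ℕ, m₀ ≤ j → 0 < (j : ℝ) := by
    intro j hj
    have : (0:ℕ) < j := by omega
    exact_mod_cast this
  have hΓj : ∀ j : ℕ, m₀ ≤ j → 0 < Real.Gamma j :=
    fun j hj => Real.Gamma_pos_of_pos (hjpos j hj)
  have hΓjτ : ∀ j : ℕ, m₀ ≤ j → 0 < Real.Gamma ((j:ℝ) + τ) :=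
    fun j hj => Real.Gamma_pos_of_pos (hjτ j hj)
  have hcpos : ∀ j : ℕ, m₀ ≤ j → 0 < c j :=
    fun j hj => div_pos (hΓj j hj) (hΓjτ j hj)
  have hrec : ∀ j : ℕ, m₀ ≤ j → c (j + 1) = c j * ((j:ℝ) / ((j:ℝ) + τ)) := by
    intro j hj
    have h1 : Real.Gamma ((j:ℝ) + 1) = (j:ℝ) * Real.Gamma j :=
      Real.Gamma_add_one (ne_of_gt (hjpos j hj))
    have h2 : Real.Gamma (((j:ℝ) + τ) + 1) = ((j:ℝ) + τ) * Real.Gamma ((j:ℝ) + τ) :=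
      Real.Gamma_add_one (ne_of_gt (hjτ j hj))
    simp only [hc]
    push_cast
    rw [show (j:ℝ) + 1 + τ = ((j:ℝ) + τ) + 1 by ring, h1, h2]
    have := ne_of_gt (hjpos j hj)
    have := ne_of_gt (hjτ j hj)
    have := ne_of_gt (hΓjτ j hj)
    field_simp
  have hF : ∀ m : ℕ,
      (∑ j ∈ Finset.Ico m₀ m, (1 / (j : ℝ)) * (Real.Gamma ((m : ℝ) + τ) * Real.Gamma j /
          (Real.Gamma ((j : ℝ) + τ) * Real.Gamma m)))
        = (Real.Gamma ((m:ℝ) + τ) / Real.Gamma m) * ∑ j ∈ Finset.Ico m₀ m, (1 / (j:ℝ)) * c j := by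
    intro m
    rw [Finset.mul_sum]
    refine Finset.sum_congr rfl fun j _ => ?_
    simp only [hc]
    ring
  refine ⟨?_, ?_, ?_⟩
  · -- τ < 0
    intro hτ
    rw [Asymptotics.isBigO_iff]
    refine ⟨1 / (-τ), ?_⟩
    filter_upwards [eventually_ge_atTop m₀] with m hm
    have hΓm := hΓj m hm
    have hΓmτ := hΓjτ m hm
    have hS0 : 0 ≤ ∑ j ∈ Finset.Ico m₀ m, (1 / (j : ℝ)) * (Real.Gamma ((m : ℝ) + τ) * Real.Gamma j /
        (Real.Gamma ((j : ℝ) + τ) * Real.Gamma m)) := by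
      refine Finset.sum_nonneg fun j hj => ?_
      have hj' := (Finset.mem_Ico.mp hj).1
      have h1 := hΓj j hj'
      have h2 := hΓjτ j hj'
      have h3 := hjpos j hj'
      positivity
    have hT : ∑ j ∈ Finset.Ico m₀ m, (1 / (j:ℝ)) * c j ≤ (c m - c m₀) / (-τ) := by
      calc ∑ j ∈ Finset.Ico m₀ m, (1 / (j:ℝ)) * c j
          ≤ ∑ j ∈ Finset.Ico m₀ m, (c (j + 1) - c j) / (-τ) := by
            refine Finset.sum_le_sum fun j hj => ?_
            have hj' := (Finset.mem_Ico.mp hj).1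
            have hcj := hcpos j hj'
            have hjt := hjτ j hj'
            have hjp := hjpos j hj'
            have heq : (c (j + 1) - c j) / (-τ) = c j / ((j:ℝ) + τ) := by
              rw [hrec j hj']
              rw [div_eq_div_iff (by linarith : (0:ℝ) < -τ).ne' hjt.ne']
              field_simp [hjt.ne']
              ring
            rw [heq, one_div, inv_mul_eq_div]
            apply div_le_div_of_nonneg_left hcj.le hjt
            linarith
        _ = (∑ j ∈ Finset.Ico m₀ m, (c (j + 1) - c j)) / (-τ) := by
            rw [Finset.sum_div]
        _ = (c m - c m₀) / (-τ) := by rw [telescope_Ico c hm]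
    have hcm := hcpos m hm
    have hcm₀ := hcpos m₀ le_rfl
    have hR : 0 < Real.Gamma ((m:ℝ) + τ) / Real.Gamma m := div_pos hΓmτ hΓm
    have hbound : ∑ j ∈ Finset.Ico m₀ m, (1 / (j : ℝ)) * (Real.Gamma ((m : ℝ) + τ) * Real.Gamma j /
        (Real.Gamma ((j : ℝ) + τ) * Real.Gamma m)) ≤ 1 / (-τ) := by
      rw [hF m]
      calc (Real.Gamma ((m:ℝ) + τ) / Real.Gamma m) * ∑ j ∈ Finset.Ico m₀ m, (1 / (j:ℝ)) * c j
          ≤ (Real.Gamma ((m:ℝ) + τ) / Real.Gamma m) * ((c m - c m₀) / (-τ)) :=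
            mul_le_mul_of_nonneg_left hT hR.le
        _ ≤ (Real.Gamma ((m:ℝ) + τ) / Real.Gamma m) * (c m / (-τ)) := by
            refine mul_le_mul_of_nonneg_left ?_ hR.le
            apply div_le_div_of_nonneg_right (by linarith) (by linarith)
        _ = 1 / (-τ) := by
            simp only [hc]
            have h1 : Real.Gamma ((m:ℝ) + τ) / Real.Gamma m * (Real.Gamma m / Real.Gamma ((m:ℝ) + τ)) = 1 := by
              rw [div_mul_div_comm, mul_comm (Real.Gamma ((m:ℝ) + τ))]
              exact div_self (ne_of_gt (mul_pos hΓm hΓmτ))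
            rw [← mul_div_assoc, h1]
    simp only [Real.norm_eq_abs, norm_one, mul_one, abs_of_nonneg hS0]
    exact hbound
  · -- τ = 0
    intro hτ
    subst hτ
    rw [Asymptotics.isBigO_iff]
    refine ⟨2, ?_⟩
    filter_upwards [eventually_ge_atTop (max m₀ 3)] with m hm
    have hm₀m : m₀ ≤ m := le_trans (le_max_left _ _) hm
    have h3m : 3 ≤ m := le_trans (le_max_right _ _) hm
    have hmpos : (0:ℝ) < m := by
      have : (0:ℕ) < m := by omega
      exact_mod_cast this
    have hSeq : (∑ j ∈ Finset.Ico m₀ m, (1 / (j : ℝ)) * (Real.Gamma ((m : ℝ) + 0) * Real.Gamma j /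
        (Real.Gamma ((j : ℝ) + 0) * Real.Gamma m))) = ∑ j ∈ Finset.Ico m₀ m, (1 / (j:ℝ)) := by
      refine Finset.sum_congr rfl fun j hj => ?_
      have hj' := (Finset.mem_Ico.mp hj).1
      have h1 : Real.Gamma ((j:ℝ)) ≠ 0 := ne_of_gt (hΓj j hj')
      have h2 : Real.Gamma ((m:ℝ)) ≠ 0 := ne_of_gt (hΓj m hm₀m)
      rw [add_zero, add_zero]
      rw [mul_comm (Real.Gamma ((m:ℝ))), div_self (by exact mul_ne_zero h1 h2), mul_one]
    have hsum_nonneg : 0 ≤ ∑ j ∈ Finset.Ico m₀ m, (1 / (j:ℝ)) := by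
      refine Finset.sum_nonneg fun j _ => by positivity
    have hsum_le : ∑ j ∈ Finset.Ico m₀ m, (1 / (j:ℝ)) ≤ 1 + Real.log m := by
      calc ∑ j ∈ Finset.Ico m₀ m, (1 / (j:ℝ))
          ≤ ∑ j ∈ Finset.Ico 1 m, (1 / (j:ℝ)) :=
            Finset.sum_le_sum_of_subset_of_nonneg
              (Finset.Ico_subset_Ico hm₀ le_rfl) (fun i _ _ => by positivity)
        _ ≤ 1 + Real.log m := harmonic_le m
    have hlog1 : 1 ≤ Real.log m := by
      rw [Real.le_log_iff_exp_le hmpos]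
      calc Real.exp 1 ≤ 2.7182818286 := Real.exp_one_lt_d9.le
        _ ≤ 3 := by norm_num
        _ ≤ (m:ℝ) := by exact_mod_cast h3m
    simp only [Real.norm_eq_abs]
    rw [hSeq, abs_of_nonneg hsum_nonneg, abs_of_nonneg (by linarith : (0:ℝ) ≤ Real.log m)]
    linarith
  · -- 0 < τ
    intro hτ
    have hm₀pos : (0:ℝ) < m₀ := hjpos m₀ le_rfl
    set K : ℝ := ((m₀:ℝ) + τ) / ((m₀:ℝ) * τ) with hK
    have hKpos : 0 < K := div_pos hpos (by positivity)
    have hΓm₀ := hΓj m₀ le_rfl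
    have hΓm₀τ := hΓjτ m₀ le_rfl
    have hcm₀ := hcpos m₀ le_rfl
    -- product formula for the Gamma ratio
    have hprod : ∀ m : ℕ, m₀ ≤ m → Real.Gamma ((m:ℝ) + τ) / Real.Gamma m =
        (Real.Gamma ((m₀:ℝ) + τ) / Real.Gamma m₀) * ∏ k ∈ Finset.Ico m₀ m, (((k:ℝ) + τ) / k) := by
      intro m hm
      induction m, hm using Nat.le_induction with
      | base => simp
      | succ n hn ih =>
        rw [Finset.prod_Ico_succ_top hn, ← mul_assoc, ← ih]
        have h1 : Real.Gamma ((n:ℝ) + 1) = (n:ℝ) * Real.Gamma n :=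
          Real.Gamma_add_one (ne_of_gt (hjpos n hn))
        have h2 : Real.Gamma (((n:ℝ) + τ) + 1) = ((n:ℝ) + τ) * Real.Gamma ((n:ℝ) + τ) :=
          Real.Gamma_add_one (ne_of_gt (hjτ n hn))
        push_cast
        rw [show (n:ℝ) + 1 + τ = ((n:ℝ) + τ) + 1 by ring, h1, h2]
        have h3 := ne_of_gt (hjpos n hn)
        have h4 := ne_of_gt (hjτ n hn)
        have h5 := ne_of_gt (hΓj n hn)
        field_simp
    rw [Asymptotics.isBigO_iff]
    refine ⟨K * Real.exp τ, ?_⟩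
    filter_upwards [eventually_ge_atTop m₀] with m hm
    have hΓm := hΓj m hm
    have hΓmτ := hΓjτ m hm
    have hmpos := hjpos m hm
    have hcm := hcpos m hm
    have hS0 : 0 ≤ ∑ j ∈ Finset.Ico m₀ m, (1 / (j : ℝ)) * (Real.Gamma ((m : ℝ) + τ) * Real.Gamma j /
        (Real.Gamma ((j : ℝ) + τ) * Real.Gamma m)) := by
      refine Finset.sum_nonneg fun j hj => ?_
      have hj' := (Finset.mem_Ico.mp hj).1
      have h1 := hΓj j hj'
      have h2 := hΓjτ j hj'
      have h3 := hjpos j hj'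
      positivity
    -- the telescoping bound for the inner sum
    have hT : ∑ j ∈ Finset.Ico m₀ m, (1 / (j:ℝ)) * c j ≤ K * c m₀ := by
      calc ∑ j ∈ Finset.Ico m₀ m, (1 / (j:ℝ)) * c j
          ≤ ∑ j ∈ Finset.Ico m₀ m, K * (c j - c (j + 1)) := by
            refine Finset.sum_le_sum fun j hj => ?_
            have hj' := (Finset.mem_Ico.mp hj).1
            have hcj := hcpos j hj'
            have hjt := hjτ j hj'
            have hjp := hjpos j hj'
            have hjm₀ : (m₀:ℝ) ≤ j := by exact_mod_cast hj'
            have heq : c j - c (j + 1) = c j * (τ / ((j:ℝ) + τ)) := by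
              rw [hrec j hj']
              field_simp [hjt.ne']
              ring
            have hKτ : 1 / (j:ℝ) ≤ K * τ / ((j:ℝ) + τ) := by
              have hKτeq : K * τ = ((m₀:ℝ) + τ) / (m₀:ℝ) := by
                rw [hK]
                field_simp
              rw [div_le_div_iff₀ hjp hjt, one_mul, hKτeq, div_mul_eq_mul_div,
                le_div_iff₀ hm₀pos]
              nlinarith [hjm₀]
            calc (1 / (j:ℝ)) * c j
                ≤ (K * τ / ((j:ℝ) + τ)) * c j := mul_le_mul_of_nonneg_right hKτ hcj.le
              _ = K * (c j - c (j + 1)) := by rw [heq]; ring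
        _ = K * ∑ j ∈ Finset.Ico m₀ m, (c j - c (j + 1)) := by rw [Finset.mul_sum]
        _ = K * (c m₀ - c m) := by
            have : ∑ j ∈ Finset.Ico m₀ m, (c j - c (j + 1))
                = -∑ j ∈ Finset.Ico m₀ m, (c (j + 1) - c j) := by
              rw [← Finset.sum_neg_distrib]
              exact Finset.sum_congr rfl fun j _ => by ring
            rw [this, telescope_Ico c hm]
            ring
        _ ≤ K * c m₀ := by nlinarith
    -- growth bound for the Gamma ratio
    have hratio : Real.Gamma ((m:ℝ) + τ) / Real.Gamma m ≤
        (Real.Gamma ((m₀:ℝ) + τ) / Real.Gamma m₀) * Real.exp (τ * (1 + Real.log m)) := by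
      rw [hprod m hm]
      have h1 : ∏ k ∈ Finset.Ico m₀ m, (((k:ℝ) + τ) / k)
          ≤ ∏ k ∈ Finset.Ico m₀ m, Real.exp (τ / k) := by
        refine Finset.prod_le_prod (fun k hk => ?_) (fun k hk => ?_)
        · have hk' := (Finset.mem_Ico.mp hk).1
          exact div_nonneg (hjτ k hk').le (hjpos k hk').le
        · have hk' := (Finset.mem_Ico.mp hk).1
          have hkp := hjpos k hk'
          have : ((k:ℝ) + τ) / k = τ / k + 1 := by
            rw [add_div, div_self hkp.ne', add_comm]
          rw [this]
          exact Real.add_one_le_exp _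
      have h2 : ∏ k ∈ Finset.Ico m₀ m, Real.exp (τ / k) ≤ Real.exp (τ * (1 + Real.log m)) := by
        rw [← Real.exp_sum]
        apply Real.exp_le_exp.mpr
        have : ∑ k ∈ Finset.Ico m₀ m, τ / (k:ℝ) = τ * ∑ k ∈ Finset.Ico m₀ m, (1 / (k:ℝ)) := by
          rw [Finset.mul_sum]
          exact Finset.sum_congr rfl fun k _ => by ring
        rw [this]
        have hsum : ∑ k ∈ Finset.Ico m₀ m, (1 / (k:ℝ)) ≤ 1 + Real.log m := by
          calc ∑ k ∈ Finset.Ico m₀ m, (1 / (k:ℝ))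
              ≤ ∑ k ∈ Finset.Ico 1 m, (1 / (k:ℝ)) :=
                Finset.sum_le_sum_of_subset_of_nonneg
                  (Finset.Ico_subset_Ico hm₀ le_rfl) (fun i _ _ => by positivity)
            _ ≤ 1 + Real.log m := harmonic_le m
        exact mul_le_mul_of_nonneg_left hsum hτ.le
      exact mul_le_mul_of_nonneg_left (le_trans h1 h2) (div_pos hΓm₀τ hΓm₀).le
    -- combine
    have hfinal : ∑ j ∈ Finset.Ico m₀ m, (1 / (j : ℝ)) * (Real.Gamma ((m : ℝ) + τ) * Real.Gamma j /
        (Real.Gamma ((j : ℝ) + τ) * Real.Gamma m)) ≤ K * Real.exp τ * (m:ℝ) ^ τ := by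
      rw [hF m]
      have hRm : 0 < Real.Gamma ((m:ℝ) + τ) / Real.Gamma m := div_pos hΓmτ hΓm
      have hTnn : 0 ≤ K * c m₀ := by positivity
      calc (Real.Gamma ((m:ℝ) + τ) / Real.Gamma m) * ∑ j ∈ Finset.Ico m₀ m, (1 / (j:ℝ)) * c j
          ≤ (Real.Gamma ((m:ℝ) + τ) / Real.Gamma m) * (K * c m₀) :=
            mul_le_mul_of_nonneg_left hT hRm.le
        _ ≤ ((Real.Gamma ((m₀:ℝ) + τ) / Real.Gamma m₀) * Real.exp (τ * (1 + Real.log m))) * (K * c m₀) :=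
            mul_le_mul_of_nonneg_right hratio hTnn
        _ = K * Real.exp τ * (m:ℝ) ^ τ := by
            have hcR : (Real.Gamma ((m₀:ℝ) + τ) / Real.Gamma m₀) * c m₀ = 1 := by
              simp only [hc]
              field_simp
            have hexp : Real.exp (τ * (1 + Real.log m)) = Real.exp τ * (m:ℝ) ^ τ := by
              rw [Real.rpow_def_of_pos hmpos, mul_add, Real.exp_add, mul_one, mul_comm τ (Real.log (m:ℝ))]
            rw [hexp]
            linear_combination (Real.exp τ * (m:ℝ) ^ τ * K) * hcR
    have hrpow : 0 < (m:ℝ) ^ τ := Real.rpow_pos_of_pos hmpos τ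
    simp only [Real.norm_eq_abs]
    rw [abs_of_nonneg hS0, abs_of_nonneg hrpow.le]
    exact hfinal
end
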